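/- (Proposition 3.9, chart version: causal curves near a point have small Lorentzian length.) Let U, g, T be as in the context, with g Lorentzian and T a time orientation. Then for every p ∈ U and every ε > 0 there is an open set V with p ∈ V ⊆ U such that every g-causal curve γ : [a,b] → V satisfies L_g(γ) < ε. -/

import Mathlib

open MeasureTheory Set Filter

noncomputable section

/-- `ℝ^{n+1}` with the Euclidean norm. -/
abbrev Esp (n : ℕ) : Type := EuclideanSpace ℝ (Fin (n + 1))

/-- The standard basis vector `e_μ` of `ℝ^{n+1}`. -/
def ee (n : ℕ) (μ : Fin (n + 1)) : Esp n := EuclideanSpace.single μ (1 : ℝ)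

/-- The quadratic form `η^α(X) = -((1-α)/(1+α))·X₀² + ∑_{i=1}^n Xᵢ²`. -/
def etaQ (n : ℕ) (α : ℝ) (X : Esp n) : ℝ :=
  -((1 - α) / (1 + α)) * X 0 ^ 2 + ∑ i ∈ Finset.univ.erase (0 : Fin (n + 1)), X i ^ 2

/-- The standard Minkowski bilinear form `η(v,w) = -v₀w₀ + ∑_{i=1}^n vᵢwᵢ`. -/
def etaB (n : ℕ) (v w : Esp n) : ℝ :=
  -(v 0 * w 0) + ∑ i ∈ Finset.univ.erase (0 : Fin (n + 1)), v i * w i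

/-- A curve is locally Lipschitz on `s` if it is Lipschitz on every compact subset of `s`. -/
def LocLipOn (n : ℕ) (γ : ℝ → Esp n) (s : Set ℝ) : Prop :=
  ∀ K, K ⊆ s → IsCompact K → ∃ C : NNReal, LipschitzOnWith C γ K

/-- An `η^α`-causal curve on `s`: locally Lipschitz, and for a.e. `t ∈ s` it is differentiable
with `η^α(γ'(t)) ≤ 0` and `(γ'(t))₀ > 0`. -/
def EtaCausalOn (n : ℕ) (α : ℝ) (γ : ℝ → Esp n) (s : Set ℝ) : Prop :=
  LocLipOn n γ s ∧
    ∀ᵐ t ∂(volume.restrict s),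
      DifferentiableAt ℝ γ t ∧ etaQ n α (deriv γ t) ≤ 0 ∧ 0 < deriv γ t 0

/-- An `η^α`-timelike curve on `s`: locally Lipschitz, and there is `δ > 0` such that for a.e.
`t ∈ s` it is differentiable with `η^α(γ'(t)) < -δ` and `(γ'(t))₀ > 0`. -/
def EtaTimelikeOn (n : ℕ) (α : ℝ) (γ : ℝ → Esp n) (s : Set ℝ) : Prop :=
  LocLipOn n γ s ∧
    ∃ δ : ℝ, 0 < δ ∧
      ∀ᵐ t ∂(volume.restrict s),
        DifferentiableAt ℝ γ t ∧ etaQ n α (deriv γ t) < -δ ∧ 0 < deriv γ t 0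

/-- `I⁺_{η^α}(p, U)`: endpoints of `η^α`-timelike curves in `U` starting at `p`. -/
def EtaIplus (n : ℕ) (α : ℝ) (p : Esp n) (U : Set (Esp n)) : Set (Esp n) :=
  {q | ∃ a b : ℝ, ∃ γ : ℝ → Esp n, a < b ∧ EtaTimelikeOn n α γ (Icc a b) ∧
        MapsTo γ (Icc a b) U ∧ γ a = p ∧ γ b = q}

/-- The Euclidean cone `C⁺_ε(p,U)`. -/
def ConeP (n : ℕ) (ε : ℝ) (p : Esp n) (U : Set (Esp n)) : Set (Esp n) :=
  {q | q ∈ U ∧ q ≠ p ∧ Real.sqrt ((1 + ε) / 2) < (q - p) 0 / ‖q - p‖}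

/-- `g` assigns to each point a symmetric bilinear form with continuous components on `U`. -/
def IsSymmCont (n : ℕ) (g : Esp n → Esp n →ₗ[ℝ] Esp n →ₗ[ℝ] ℝ) (U : Set (Esp n)) : Prop :=
  (∀ x ∈ U, ∀ v w : Esp n, g x v w = g x w v) ∧
    ∀ μ ν : Fin (n + 1), ContinuousOn (fun x => g x (ee n μ) (ee n ν)) U

/-- `g` is Lorentzian on `U`: at each point it is linearly equivalent to the Minkowski form. -/
def IsLorentzian (n : ℕ) (g : Esp n → Esp n →ₗ[ℝ] Esp n →ₗ[ℝ] ℝ) (U : Set (Esp n)) : Prop :=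
  ∀ x ∈ U, ∃ L : Esp n ≃ₗ[ℝ] Esp n, ∀ v w : Esp n, g x (L v) (L w) = etaB n v w

/-- `T` is a time orientation for `g` on `U`. -/
def IsTimeOrientation (n : ℕ) (g : Esp n → Esp n →ₗ[ℝ] Esp n →ₗ[ℝ] ℝ)
    (T : Esp n → Esp n) (U : Set (Esp n)) : Prop :=
  ContinuousOn T U ∧ ∀ x ∈ U, g x (T x) (T x) < 0

/-- `X` is future-directed causal at `x` (w.r.t. the time orientation `T`). -/
def FDCausal (n : ℕ) (g : Esp n → Esp n →ₗ[ℝ] Esp n →ₗ[ℝ] ℝ) (T : Esp n → Esp n)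
    (x X : Esp n) : Prop :=
  X ≠ 0 ∧ g x X X ≤ 0 ∧ g x (T x) X < 0

/-- A `g`-causal curve on `s` with values in `U`. -/
def GCausalOn (n : ℕ) (g : Esp n → Esp n →ₗ[ℝ] Esp n →ₗ[ℝ] ℝ) (T : Esp n → Esp n)
    (U : Set (Esp n)) (γ : ℝ → Esp n) (s : Set ℝ) : Prop :=
  LocLipOn n γ s ∧ MapsTo γ s U ∧
    ∀ᵐ t ∂(volume.restrict s),
      DifferentiableAt ℝ γ t ∧ FDCausal n g T (γ t) (deriv γ t)

/-- A `g`-timelike curve on `s` with values in `U`. -/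
def GTimelikeOn (n : ℕ) (g : Esp n → Esp n →ₗ[ℝ] Esp n →ₗ[ℝ] ℝ) (T : Esp n → Esp n)
    (U : Set (Esp n)) (γ : ℝ → Esp n) (s : Set ℝ) : Prop :=
  LocLipOn n γ s ∧ MapsTo γ s U ∧
    ∃ δ : ℝ, 0 < δ ∧
      ∀ᵐ t ∂(volume.restrict s),
        DifferentiableAt ℝ γ t ∧
          g (γ t) (deriv γ t) (deriv γ t) < -δ ∧ g (γ t) (T (γ t)) (deriv γ t) < 0

/-- `I⁺_g(p,U)`: endpoints of `g`-timelike curves in `U` starting at `p`. -/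
def GIplus (n : ℕ) (g : Esp n → Esp n →ₗ[ℝ] Esp n →ₗ[ℝ] ℝ) (T : Esp n → Esp n)
    (p : Esp n) (U : Set (Esp n)) : Set (Esp n) :=
  {q | ∃ a b : ℝ, ∃ γ : ℝ → Esp n, a < b ∧ GTimelikeOn n g T U γ (Icc a b) ∧
        γ a = p ∧ γ b = q}

/-- `J⁺_g(p,U)`: `p` together with endpoints of `g`-causal curves in `U` starting at `p`. -/
def GJplus (n : ℕ) (g : Esp n → Esp n →ₗ[ℝ] Esp n →ₗ[ℝ] ℝ) (T : Esp n → Esp n)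
    (p : Esp n) (U : Set (Esp n)) : Set (Esp n) :=
  insert p
    {q | ∃ a b : ℝ, ∃ γ : ℝ → Esp n, a < b ∧ GCausalOn n g T U γ (Icc a b) ∧
          γ a = p ∧ γ b = q}

/-- Lorentzian length `L_g(γ)` of a curve on `[a,b]`. -/
def Lg (n : ℕ) (g : Esp n → Esp n →ₗ[ℝ] Esp n →ₗ[ℝ] ℝ) (γ : ℝ → Esp n) (a b : ℝ) : ℝ :=
  ∫ t in a..b, Real.sqrt (max 0 (-(g (γ t) (deriv γ t) (deriv γ t))))

/-- Euclidean length of a curve on `[a,b]`. -/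
def Leuc (n : ℕ) (γ : ℝ → Esp n) (a b : ℝ) : ℝ :=
  ∫ t in a..b, ‖deriv γ t‖

/-- `η^α`-Lorentzian length of a curve on `[a,b]`. -/
def Leta (n : ℕ) (α : ℝ) (γ : ℝ → Esp n) (a b : ℝ) : ℝ :=
  ∫ t in a..b, Real.sqrt (max 0 (-(etaQ n α (deriv γ t))))


open Topology intervalIntegral

lemma esp_sum (n : ℕ) (X : Esp n) : ∑ μ, X μ • ee n μ = X := by
  have := (EuclideanSpace.basisFun (Fin (n + 1)) ℝ).sum_repr X
  simpa [ee, EuclideanSpace.basisFun_apply, EuclideanSpace.basisFun_repr] using this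

lemma bilin_expand (n : ℕ) (B : Esp n →ₗ[ℝ] Esp n →ₗ[ℝ] ℝ) (v w : Esp n) :
    B v w = ∑ μ, ∑ ν, v μ * w ν * B (ee n μ) (ee n ν) := by
  conv_lhs => rw [← esp_sum n v, ← esp_sum n w]
  simp only [map_sum, _root_.map_smul, LinearMap.sum_apply, LinearMap.smul_apply, smul_eq_mul]
  rw [Finset.sum_comm]
  refine Finset.sum_congr rfl fun μ _ => ?_
  rw [Finset.mul_sum]
  exact Finset.sum_congr rfl fun ν _ => by ring

lemma coord_abs_le_norm (n : ℕ) (X : Esp n) (μ : Fin (n + 1)) : |X μ| ≤ ‖X‖ := by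
  rw [EuclideanSpace.norm_eq]
  have h1 : |X μ| ^ 2 ≤ ∑ i, ‖X i‖ ^ 2 := by
    have := Finset.single_le_sum (f := fun i => ‖X i‖ ^ 2)
      (fun i _ => sq_nonneg _) (Finset.mem_univ μ)
    simpa [Real.norm_eq_abs, sq_abs] using this
  calc |X μ| = Real.sqrt (|X μ| ^ 2) := (Real.sqrt_sq (abs_nonneg _)).symm
    _ ≤ _ := Real.sqrt_le_sqrt h1

lemma eta_cross_ne_zero (n : ℕ) {t v : Esp n} (ht : etaB n t t < 0)
    (hv : etaB n v v ≤ 0) (hv0 : v ≠ 0) : etaB n t v ≠ 0 := by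
  intro hzero
  set s := Finset.univ.erase (0 : Fin (n + 1))
  have hts : ∑ i ∈ s, t i ^ 2 < t 0 ^ 2 := by
    have : -(t 0 * t 0) + ∑ i ∈ s, t i * t i < 0 := ht
    have e : ∑ i ∈ s, t i * t i = ∑ i ∈ s, t i ^ 2 :=
      Finset.sum_congr rfl fun i _ => (sq (t i)).symm
    nlinarith [this]
  have hvs : ∑ i ∈ s, v i ^ 2 ≤ v 0 ^ 2 := by
    have : -(v 0 * v 0) + ∑ i ∈ s, v i * v i ≤ 0 := hv
    have e : ∑ i ∈ s, v i * v i = ∑ i ∈ s, v i ^ 2 :=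
      Finset.sum_congr rfl fun i _ => (sq (v i)).symm
    nlinarith [this]
  have hst_nonneg : 0 ≤ ∑ i ∈ s, t i ^ 2 := Finset.sum_nonneg fun i _ => sq_nonneg _
  have hsv_nonneg : 0 ≤ ∑ i ∈ s, v i ^ 2 := Finset.sum_nonneg fun i _ => sq_nonneg _
  have ht0sq : 0 < t 0 ^ 2 := lt_of_le_of_lt hst_nonneg hts
  have hv00 : v 0 ≠ 0 := by
    intro h0
    apply hv0
    have hsum : ∑ i ∈ s, v i * v i ≤ 0 := by
      have : -(v 0 * v 0) + ∑ i ∈ s, v i * v i ≤ 0 := hv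
      rw [h0] at this; linarith
    have hsum0 : ∑ i ∈ s, v i * v i = 0 :=
      le_antisymm hsum (Finset.sum_nonneg fun i _ => mul_self_nonneg _)
    have hall := (Finset.sum_eq_zero_iff_of_nonneg
      (fun i _ => mul_self_nonneg (v i))).1 hsum0
    ext i
    by_cases hi : i = (0 : Fin (n + 1))
    · rw [hi]; exact h0
    · have := hall i (Finset.mem_erase.2 ⟨hi, Finset.mem_univ i⟩)
      exact mul_self_eq_zero.1 this
  have hv0sq : 0 < v 0 ^ 2 := by positivity
  have hzero' : ∑ i ∈ s, t i * v i = t 0 * v 0 := by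
    have : -(t 0 * v 0) + ∑ i ∈ s, t i * v i = 0 := hzero
    linarith
  have cs := Finset.sum_mul_sq_le_sq_mul_sq s (fun i => t i) (fun i => v i)
  have cs' : t 0 ^ 2 * v 0 ^ 2 ≤ (∑ i ∈ s, t i ^ 2) * ∑ i ∈ s, v i ^ 2 := by
    calc t 0 ^ 2 * v 0 ^ 2 = (t 0 * v 0) ^ 2 := (mul_pow _ _ _).symm
      _ = (∑ i ∈ s, t i * v i) ^ 2 := by rw [hzero']
      _ ≤ _ := cs
  rcases eq_or_lt_of_le hsv_nonneg with heq | hlt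
  · rw [← heq, mul_zero] at cs'
    nlinarith [mul_pos ht0sq hv0sq]
  · have h1 : (∑ i ∈ s, t i ^ 2) * ∑ i ∈ s, v i ^ 2 < t 0 ^ 2 * ∑ i ∈ s, v i ^ 2 :=
      mul_lt_mul_of_pos_right hts hlt
    have h2 : t 0 ^ 2 * ∑ i ∈ s, v i ^ 2 ≤ t 0 ^ 2 * v 0 ^ 2 :=
      mul_le_mul_of_nonneg_left hvs (le_of_lt ht0sq)
    linarith


lemma lipschitz_integral_deriv_le {C : NNReal} {f : ℝ → ℝ} (hf : LipschitzWith C f)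
    {a b : ℝ} (hab : a ≤ b) : ∫ t in a..b, deriv f t ≤ f b - f a := by
  have hcont : Continuous f := hf.continuous
  set h : ℕ → ℝ := fun k => ((k : ℝ) + 1)⁻¹ with hh
  have hpos : ∀ k, 0 < h k := fun k => by positivity
  have hlim : Tendsto h atTop (𝓝 0) := by
    simpa [hh, one_div] using tendsto_one_div_add_atTop_nhds_zero_nat (𝕜 := ℝ)
  set g : ℕ → ℝ → ℝ := fun k t => (h k)⁻¹ * (f (t + h k) - f t) with hg
  have hae : ∀ᵐ t ∂(volume.restrict (Ioc a b)),
      Tendsto (fun k => g k t) atTop (𝓝 (deriv f t)) := by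
    apply ae_restrict_of_ae
    filter_upwards [hf.ae_differentiableAt (μ := volume)] with t ht
    have H := ht.hasDerivAt.tendsto_slope_zero
    have h2 : Tendsto h atTop (𝓝[≠] (0:ℝ)) :=
      tendsto_nhdsWithin_of_tendsto_nhds_of_eventually_within _ hlim
        (Eventually.of_forall fun k => (hpos k).ne')
    have := H.comp h2
    simpa [hg, Function.comp_def, smul_eq_mul] using this
  have hbd : ∀ k t, |g k t| ≤ (C : ℝ) := by
    intro k t
    have hd : |f (t + h k) - f t| ≤ (C : ℝ) * |t + h k - t| := by
      simpa [Real.dist_eq] using hf.dist_le_mul (t + h k) t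
    have h1 : |t + h k - t| = h k := by
      rw [add_sub_cancel_left, abs_of_pos (hpos k)]
    rw [hg]
    simp only []
    rw [abs_mul, abs_inv, abs_of_pos (hpos k)]
    rw [h1] at hd
    calc (h k)⁻¹ * |f (t + h k) - f t| ≤ (h k)⁻¹ * ((C : ℝ) * h k) := by
          exact mul_le_mul_of_nonneg_left hd (le_of_lt (inv_pos.2 (hpos k)))
      _ = (C : ℝ) := by rw [mul_comm, mul_assoc, mul_inv_cancel₀ (hpos k).ne', mul_one]
  have hmeas : ∀ k, AEStronglyMeasurable (g k) (volume.restrict (Ioc a b)) := by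
    intro k
    exact (Continuous.aestronglyMeasurable (by continuity))
  have hInt : Tendsto (fun k => ∫ t in Ioc a b, g k t) atTop
      (𝓝 (∫ t in Ioc a b, deriv f t)) := by
    refine tendsto_integral_of_dominated_convergence (fun _ => (C : ℝ)) hmeas
      (integrable_const _) (fun k => Eventually.of_forall fun t => by
        simpa [Real.norm_eq_abs] using hbd k t) hae
  have hintf : ∀ u v : ℝ, IntervalIntegrable f volume u v := fun u v =>
    hcont.intervalIntegrable u v
  have hk : ∀ k, ∫ t in Ioc a b, g k t ≤ f b - f a + 2 * C * h k := by
    intro k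
    have e0 : ∫ t in Ioc a b, g k t = ∫ t in a..b, g k t :=
      (intervalIntegral.integral_of_le hab).symm
    have e1 : ∫ t in a..b, g k t
        = (h k)⁻¹ * ∫ t in a..b, (f (t + h k) - f t) := by
      rw [hg]; exact intervalIntegral.integral_const_mul _ _
    have e2 : ∫ t in a..b, (f (t + h k) - f t)
        = (∫ t in a + h k..b + h k, f t) - ∫ t in a..b, f t := by
      have hi : IntervalIntegrable (fun t => f (t + h k)) volume a b :=
        (hcont.comp (continuous_add_right _)).intervalIntegrable _ _
      rw [intervalIntegral.integral_sub hi (hintf a b)]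
      rw [intervalIntegral.integral_comp_add_right]
    have A : (∫ t in a..(a + h k), f t) + (∫ t in (a + h k)..(b + h k), f t)
        = ∫ t in a..(b + h k), f t := integral_add_adjacent_intervals (hintf _ _) (hintf _ _)
    have B : (∫ t in a..b, f t) + (∫ t in b..(b + h k), f t)
        = ∫ t in a..(b + h k), f t := integral_add_adjacent_intervals (hintf _ _) (hintf _ _)
    have E1 : ∫ t in b..(b + h k), f t ≤ h k * (f b + C * h k) := by
      have hb : b ≤ b + h k := by linarith [hpos k]
      calc ∫ t in b..(b + h k), f t ≤ ∫ _t in b..(b + h k), (f b + C * h k) := by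
            refine intervalIntegral.integral_mono_on hb (hintf _ _)
              (intervalIntegrable_const) (fun t ht => ?_)
            have : |f t - f b| ≤ (C : ℝ) * |t - b| := by
              simpa [Real.dist_eq] using hf.dist_le_mul t b
            have h3 : |t - b| ≤ h k := by
              rw [abs_of_nonneg (by linarith [ht.1])]; linarith [ht.2]
            have := abs_le.1 this
            nlinarith [this.2, mul_le_mul_of_nonneg_left h3 (C.coe_nonneg)]
        _ = h k * (f b + C * h k) := by
            simp [intervalIntegral.integral_const]; ring
    have E2 : h k * (f a - C * h k) ≤ ∫ t in a..(a + h k), f t := by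
      have ha : a ≤ a + h k := by linarith [hpos k]
      calc h k * (f a - C * h k) = ∫ _t in a..(a + h k), (f a - C * h k) := by
            simp [intervalIntegral.integral_const]; ring
        _ ≤ ∫ t in a..(a + h k), f t := by
            refine intervalIntegral.integral_mono_on ha (intervalIntegrable_const)
              (hintf _ _) (fun t ht => ?_)
            have : |f t - f a| ≤ (C : ℝ) * |t - a| := by
              simpa [Real.dist_eq] using hf.dist_le_mul t a
            have h3 : |t - a| ≤ h k := by
              rw [abs_of_nonneg (by linarith [ht.1])]; linarith [ht.2]
            have := (abs_le.1 this).1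
            nlinarith [mul_le_mul_of_nonneg_left h3 (C.coe_nonneg)]
    have hD : (∫ t in a + h k..b + h k, f t) - (∫ t in a..b, f t)
        ≤ h k * (f b - f a + 2 * C * h k) := by nlinarith [A, B, E1, E2]
    rw [e0, e1, e2]
    have hinv : (0:ℝ) < (h k)⁻¹ := inv_pos.2 (hpos k)
    calc (h k)⁻¹ * ((∫ t in a + h k..b + h k, f t) - ∫ t in a..b, f t)
        ≤ (h k)⁻¹ * (h k * (f b - f a + 2 * C * h k)) :=
          mul_le_mul_of_nonneg_left hD hinv.le
      _ = f b - f a + 2 * C * h k := by rw [inv_mul_cancel_left₀ (hpos k).ne']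
  have hlim2 : Tendsto (fun k => f b - f a + 2 * (C : ℝ) * h k) atTop (𝓝 (f b - f a)) := by
    have := hlim.const_mul (2 * (C : ℝ))
    simpa using tendsto_const_nhds.add this
  rw [intervalIntegral.integral_of_le hab]
  exact le_of_tendsto_of_tendsto' hInt hlim2 hk

set_option maxHeartbeats 2000000 in
/-- Proposition 3.9, chart version: causal curves near a point have small Lorentzian length. -/
theorem stmt_6 (n : ℕ) (hn : 1 ≤ n) (U : Set (Esp n)) (hU : IsOpen U)
    (g : Esp n → Esp n →ₗ[ℝ] Esp n →ₗ[ℝ] ℝ) (hg : IsSymmCont n g U)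
    (hlor : IsLorentzian n g U)
    (T : Esp n → Esp n) (hT : IsTimeOrientation n g T U)
    (p : Esp n) (hp : p ∈ U) (ε : ℝ) (hε : 0 < ε) :
    ∃ V : Set (Esp n), IsOpen V ∧ p ∈ V ∧ V ⊆ U ∧
      ∀ a b : ℝ, a ≤ b → ∀ γ : ℝ → Esp n,
        GCausalOn n g T V γ (Icc a b) → Lg n g γ a b < ε := by
  classical
  -- component functions of g
  set G : Fin (n + 1) → Fin (n + 1) → Esp n → ℝ := fun μ ν x => g x (ee n μ) (ee n ν) with hGdef
  have hcoord : ∀ μ : Fin (n + 1), Continuous fun X : Esp n => X μ :=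
    fun μ => (EuclideanSpace.proj μ : Esp n →L[ℝ] ℝ).continuous
  have hTp : g p (T p) (T p) < 0 := hT.2 p hp
  -- the covector φ
  set φL : Esp n →L[ℝ] ℝ := -(LinearMap.toContinuousLinearMap (g p (T p))) with hφdef
  have hφapp : ∀ X : Esp n, φL X = -(g p (T p) X) := fun X => by
    simp [hφdef]
  -- positivity of φ on causal vectors at p
  have pos : ∀ X : Esp n, ‖X‖ = 1 → g p X X ≤ 0 → g p (T p) X ≤ 0 → 0 < φL X := by
    intro X hXn hXc hXT
    obtain ⟨L, hL⟩ := hlor p hp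
    have hXne : X ≠ 0 := by
      intro h; rw [h] at hXn; simp at hXn
    have hne : g p (T p) X ≠ 0 := by
      have h1 : etaB n (L.symm (T p)) (L.symm (T p)) < 0 := by
        rw [← hL (L.symm (T p)) (L.symm (T p))]
        simpa [L.apply_symm_apply] using hTp
      have h2 : etaB n (L.symm X) (L.symm X) ≤ 0 := by
        rw [← hL (L.symm X) (L.symm X)]
        simpa [L.apply_symm_apply] using hXc
      have h3 : (L.symm X) ≠ 0 := by
        intro h
        apply hXne
        have := congrArg L h
        simpa [L.apply_symm_apply] using this
      have h4 := eta_cross_ne_zero n h1 h2 h3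
      rw [← hL (L.symm (T p)) (L.symm X)] at h4
      simpa [L.apply_symm_apply] using h4
    rw [hφapp]
    rcases lt_or_eq_of_le hXT with h | h
    · linarith
    · exact absurd h hne
  -- continuity of the quadratic forms at p
  have hq1 : Continuous fun X : Esp n => g p X X := by
    have he : (fun X : Esp n => g p X X)
        = fun X => ∑ μ, ∑ ν, X μ * X ν * G μ ν p :=
      funext fun X => bilin_expand n (g p) X X
    rw [he]
    exact continuous_finset_sum _ fun μ _ => continuous_finset_sum _ fun ν _ =>
      ((hcoord μ).mul (hcoord ν)).mul continuous_const
  have hq2 : Continuous fun X : Esp n => g p (T p) X :=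
    (g p (T p)).continuous_of_finiteDimensional
  -- the compact set of causal directions at p and the constant c
  set Kp : Set (Esp n) :=
    {X | ‖X‖ = 1} ∩ ({X | g p X X ≤ 0} ∩ {X | g p (T p) X ≤ 0}) with hKpdef
  have hKpcpt : IsCompact Kp := by
    refine Metric.isCompact_of_isClosed_isBounded ?_ ?_
    · exact (isClosed_eq continuous_norm continuous_const).inter
        ((isClosed_le hq1 continuous_const).inter (isClosed_le hq2 continuous_const))
    · refine (Metric.isBounded_closedBall (x := (0 : Esp n)) (r := 1)).subset ?_
      intro X hX
      simp only [Metric.mem_closedBall, dist_zero_right]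
      exact le_of_eq hX.1
  obtain ⟨c, hc0, hc⟩ : ∃ c : ℝ, 0 < c ∧ ∀ X ∈ Kp, c < φL X := by
    rcases Kp.eq_empty_or_nonempty with he | hne
    · exact ⟨1, one_pos, by rw [he]; simp⟩
    · obtain ⟨X₀, hX₀, hmin⟩ := hKpcpt.exists_isMinOn hne φL.continuous.continuousOn
      have hpos₀ : 0 < φL X₀ := pos X₀ hX₀.1 hX₀.2.1 hX₀.2.2
      exact ⟨φL X₀ / 2, by linarith, fun X hX => lt_of_lt_of_le (by linarith) (hmin hX)⟩
  -- tube lemma setup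
  set K' : Set (Esp n) := Metric.sphere 0 1 ∩ {X | φL X ≤ c} with hK'def
  have hK'cpt : IsCompact K' :=
    (isCompact_sphere 0 1).inter_right (isClosed_le φL.continuous continuous_const)
  set Ψ : Esp n × Esp n → ℝ := fun q => max (g q.1 q.2 q.2) (g q.1 (T q.1) q.2) with hΨdef
  have hΨcont : ContinuousOn Ψ (U ×ˢ (univ : Set (Esp n))) := by
    have he : Ψ = fun q : Esp n × Esp n =>
        max (∑ μ, ∑ ν, q.2 μ * q.2 ν * G μ ν q.1)
            (∑ μ, ∑ ν, (T q.1) μ * q.2 ν * G μ ν q.1) := by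
      funext q
      rw [hΨdef]
      simp only []
      rw [bilin_expand n (g q.1) q.2 q.2, bilin_expand n (g q.1) (T q.1) q.2]
    rw [he]
    have hGc : ∀ μ ν, ContinuousOn (fun q : Esp n × Esp n => G μ ν q.1)
        (U ×ˢ (univ : Set (Esp n))) := fun μ ν =>
      (hg.2 μ ν).comp continuous_fst.continuousOn (fun q hq => hq.1)
    have hTfst : ContinuousOn (fun q : Esp n × Esp n => T q.1)
        (U ×ˢ (univ : Set (Esp n))) :=
      hT.1.comp continuous_fst.continuousOn (fun q hq => hq.1)
    have hTc : ∀ μ, ContinuousOn (fun q : Esp n × Esp n => T q.1 μ)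
        (U ×ˢ (univ : Set (Esp n))) := by
      intro μ
      exact (hcoord μ).comp_continuousOn hTfst
    refine ContinuousOn.sup' ?_ ?_
    · exact continuousOn_finset_sum _ fun μ _ => continuousOn_finset_sum _ fun ν _ =>
        ((((hcoord μ).comp continuous_snd).continuousOn.mul
          ((hcoord ν).comp continuous_snd).continuousOn)).mul (hGc μ ν)
    · exact continuousOn_finset_sum _ fun μ _ => continuousOn_finset_sum _ fun ν _ =>
        ((hTc μ).mul ((hcoord ν).comp continuous_snd).continuousOn).mul (hGc μ ν)
  set Ω : Set (Esp n × Esp n) := (U ×ˢ (univ : Set (Esp n))) ∩ Ψ ⁻¹' (Ioi 0) with hΩdef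
  have hΩopen : IsOpen Ω :=
    hΨcont.isOpen_inter_preimage (hU.prod isOpen_univ) isOpen_Ioi
  have hsub : ({p} ×ˢ K') ⊆ Ω := by
    rintro ⟨x, X⟩ ⟨hx, hX⟩
    have hxe : x = p := hx
    change K' X at hX
    rw [show ((x, X) : Esp n × Esp n) = (p, X) by rw [hxe]]
    refine ⟨⟨hp, trivial⟩, ?_⟩
    simp only [mem_preimage, mem_Ioi, hΨdef]
    by_contra hle
    push_neg at hle
    have h1 : g p X X ≤ 0 := le_trans (le_max_left _ _) hle
    have h2 : g p (T p) X ≤ 0 := le_trans (le_max_right _ _) hle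
    have hXn : ‖X‖ = 1 := by
      have := hX.1
      rwa [mem_sphere_zero_iff_norm] at this
    have := hc X ⟨hXn, h1, h2⟩
    have := hX.2
    simp only [mem_setOf_eq] at this
    linarith [hc X ⟨hXn, h1, h2⟩]
  obtain ⟨u, v, hu, hv, hpu, hK'v, huv⟩ :=
    generalized_tube_lemma isCompact_singleton hK'cpt hΩopen hsub
  -- the bound M₀ near p
  set H : Esp n → ℝ := fun x => ∑ μ, ∑ ν, |G μ ν x - G μ ν p| with hHdef
  have hHcont : ContinuousOn H U :=
    continuousOn_finset_sum _ fun μ _ => continuousOn_finset_sum _ fun ν _ =>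
      ((hg.2 μ ν).sub continuousOn_const).abs
  set V₂ : Set (Esp n) := U ∩ H ⁻¹' (Iio 1) with hV₂def
  have hV₂open : IsOpen V₂ := hHcont.isOpen_inter_preimage hU isOpen_Iio
  have hpV₂ : p ∈ V₂ := ⟨hp, by simp [hHdef]⟩
  set M₀ : ℝ := (∑ μ, ∑ ν, |G μ ν p|) + 1 with hM₀def
  have hM₀pos : 0 < M₀ := by
    have : (0:ℝ) ≤ ∑ μ, ∑ ν, |G μ ν p| :=
      Finset.sum_nonneg fun μ _ => Finset.sum_nonneg fun ν _ => abs_nonneg _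
    rw [hM₀def]; linarith
  have hbound : ∀ x ∈ V₂, ∀ Y : Esp n, ‖Y‖ = 1 → |g x Y Y| ≤ M₀ := by
    intro x hx Y hY
    rw [bilin_expand n (g x) Y Y]
    calc |∑ μ, ∑ ν, Y μ * Y ν * G μ ν x|
        ≤ ∑ μ, ∑ ν, |Y μ * Y ν * G μ ν x| := by
          refine le_trans (Finset.abs_sum_le_sum_abs _ _) ?_
          exact Finset.sum_le_sum fun μ _ => Finset.abs_sum_le_sum_abs _ _
      _ ≤ ∑ μ, ∑ ν, |G μ ν x| := by
          refine Finset.sum_le_sum fun μ _ => Finset.sum_le_sum fun ν _ => ?_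
          rw [abs_mul, abs_mul]
          have h1 : |Y μ| ≤ 1 := hY ▸ coord_abs_le_norm n Y μ
          have h2 : |Y ν| ≤ 1 := hY ▸ coord_abs_le_norm n Y ν
          have h3 : |Y μ| * |Y ν| ≤ 1 :=
            mul_le_one₀ h1 (abs_nonneg _) h2
          simpa using mul_le_mul_of_nonneg_right h3 (abs_nonneg (G μ ν x))
      _ ≤ ∑ μ, ∑ ν, (|G μ ν p| + |G μ ν x - G μ ν p|) := by
          refine Finset.sum_le_sum fun μ _ => Finset.sum_le_sum fun ν _ => ?_
          calc |G μ ν x| = |G μ ν p + (G μ ν x - G μ ν p)| := by ring_nf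
            _ ≤ |G μ ν p| + |G μ ν x - G μ ν p| := abs_add_le _ _
      _ = (∑ μ, ∑ ν, |G μ ν p|) + H x := by
          rw [hHdef]
          rw [← Finset.sum_add_distrib]
          exact Finset.sum_congr rfl fun μ _ => Finset.sum_add_distrib
      _ ≤ M₀ := by
          have := hx.2
          simp only [mem_preimage, mem_Iio] at this
          rw [hM₀def]; linarith
  -- the constants
  set Kc : ℝ := Real.sqrt M₀ / c with hKcdef
  have hKc : 0 < Kc := div_pos (Real.sqrt_pos.2 hM₀pos) hc0
  set r : ℝ := ε / (2 * (Kc + 1) * (‖φL‖ + 1)) with hrdef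
  have hr : 0 < r := by
    rw [hrdef]
    have h2 : (0:ℝ) < Kc + 1 := by linarith
    have h3 : (0:ℝ) < ‖φL‖ + 1 := by positivity
    have h1 : (0:ℝ) < 2 * (Kc + 1) * (‖φL‖ + 1) := by positivity
    exact div_pos hε h1
  -- the neighborhood V
  refine ⟨(u ∩ V₂) ∩ Metric.ball p r, ((hu.inter hV₂open).inter Metric.isOpen_ball),
    ⟨⟨hpu rfl, hpV₂⟩, Metric.mem_ball_self hr⟩, fun x hx => hx.1.2.1, ?_⟩
  -- the key pointwise estimate
  have key : ∀ x ∈ (u ∩ V₂) ∩ Metric.ball p r, ∀ X : Esp n, FDCausal n g T x X →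
      Real.sqrt (max 0 (-(g x X X))) ≤ Kc * φL X := by
    intro x hx X hX
    obtain ⟨hX0, hXc, hXT⟩ := hX
    have hs : 0 < ‖X‖ := norm_pos_iff.2 hX0
    set Y : Esp n := ‖X‖⁻¹ • X with hYdef
    have hYnorm : ‖Y‖ = 1 := by
      rw [hYdef, norm_smul, norm_inv, norm_norm]
      field_simp
    have hgYY : g x Y Y = ‖X‖⁻¹ * (‖X‖⁻¹ * g x X X) := by
      rw [hYdef]
      simp only [_root_.map_smul, LinearMap.smul_apply, smul_eq_mul]
    have hinv : (0:ℝ) ≤ ‖X‖⁻¹ := inv_nonneg.2 hs.le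
    have hYY : g x Y Y ≤ 0 := by
      rw [hgYY]
      exact mul_nonpos_iff.2 (Or.inl ⟨hinv, mul_nonpos_iff.2 (Or.inl ⟨hinv, hXc⟩)⟩)
    have hTY : g x (T x) Y ≤ 0 := by
      rw [hYdef]
      simp only [_root_.map_smul, smul_eq_mul]
      exact mul_nonpos_iff.2 (Or.inl ⟨hinv, hXT.le⟩)
    have hYnotv : Y ∉ v := by
      intro hYv
      have hmem : (x, Y) ∈ Ω := huv (Set.mk_mem_prod hx.1.1 hYv)
      have := hmem.2
      simp only [mem_preimage, mem_Ioi, hΨdef] at this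
      have : (0:ℝ) < max (g x Y Y) (g x (T x) Y) := this
      have := max_le hYY hTY
      linarith
    have hφY : c < φL Y := by
      by_contra hle
      push_neg at hle
      exact hYnotv (hK'v ⟨mem_sphere_zero_iff_norm.2 hYnorm, hle⟩)
    have hbY : -(g x Y Y) ≤ M₀ :=
      le_trans (neg_le_abs _) (hbound x hx.1.2 Y hYnorm)
    have hXsY : X = ‖X‖ • Y := by
      rw [hYdef, smul_smul]
      field_simp
      rw [one_smul]
    have hφX : φL X = ‖X‖ * φL Y := by
      conv_lhs => rw [hXsY]
      simp [smul_eq_mul]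
    have hsc : ‖X‖ * c < φL X := by
      rw [hφX]
      exact mul_lt_mul_of_pos_left hφY hs
    have hgXX : -(g x X X) = ‖X‖ ^ 2 * (-(g x Y Y)) := by
      have h2 : g x X X = ‖X‖ ^ 2 * g x Y Y := by
        rw [hgYY]
        field_simp
      rw [h2]; ring
    have h1 : max 0 (-(g x X X)) ≤ ‖X‖ ^ 2 * M₀ := by
      refine max_le (mul_nonneg (sq_nonneg _) hM₀pos.le) ?_
      rw [hgXX]
      exact mul_le_mul_of_nonneg_left hbY (sq_nonneg _)
    calc Real.sqrt (max 0 (-(g x X X))) ≤ Real.sqrt (‖X‖ ^ 2 * M₀) := Real.sqrt_le_sqrt h1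
      _ = ‖X‖ * Real.sqrt M₀ := by
          rw [Real.sqrt_mul (sq_nonneg _), Real.sqrt_sq hs.le]
      _ = (‖X‖ * c) * (Real.sqrt M₀ / c) := by field_simp
      _ ≤ φL X * Kc := by
          rw [hKcdef]
          exact mul_le_mul_of_nonneg_right hsc.le (div_nonneg (Real.sqrt_nonneg _) hc0.le)
      _ = Kc * φL X := mul_comm _ _
  intro a b hab γ hγ
  obtain ⟨hlip, hmaps, hae⟩ := hγ
  obtain ⟨C₀, hC₀⟩ := hlip (Icc a b) Subset.rfl isCompact_Icc
  have hf₀ : LipschitzOnWith (‖φL‖₊ * C₀) (⇑φL ∘ γ) (Icc a b) :=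
    φL.lipschitz.comp_lipschitzOnWith hC₀
  obtain ⟨f, hfLip, hEq⟩ := hf₀.extend_real
  set F : ℝ → ℝ := fun t => Real.sqrt (max 0 (-(g (γ t) (deriv γ t) (deriv γ t)))) with hFdef
  have hderivbd : ∀ t, |deriv f t| ≤ ((‖φL‖₊ * C₀ : NNReal) : ℝ) := by
    intro t
    have h := norm_deriv_le_of_lipschitzOn (univ_mem : (univ : Set ℝ) ∈ 𝓝 t)
      (hfLip.lipschitzOnWith (s := univ))
    simpa [Real.norm_eq_abs] using h
  have hae' : ∀ᵐ t ∂(volume.restrict (Ioc a b)),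
      DifferentiableAt ℝ γ t ∧ FDCausal n g T (γ t) (deriv γ t) :=
    ae_restrict_of_ae_restrict_of_subset Ioc_subset_Icc_self hae
  have hmemIoc : ∀ᵐ t ∂(volume.restrict (Ioc a b)), t ∈ Ioc a b :=
    ae_restrict_mem measurableSet_Ioc
  have hne_b : ∀ᵐ t ∂(volume.restrict (Ioc a b)), t ≠ b := by
    refine ae_iff.2 ?_
    have hset : {t : ℝ | ¬ t ≠ b} = {b} := by ext t; simp
    rw [hset]
    refine le_antisymm (le_trans (Measure.le_iff'.1 Measure.restrict_le_self {b}) ?_) (zero_le)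
    simp
  have haeF : ∀ᵐ t ∂(volume.restrict (Ioc a b)), F t ≤ Kc * deriv f t := by
    filter_upwards [hae', hmemIoc, hne_b] with t ht htm htb
    have htIoo : t ∈ Ioo a b := ⟨htm.1, lt_of_le_of_ne htm.2 htb⟩
    have htIcc : t ∈ Icc a b := Ioc_subset_Icc_self htm
    have hγV := hmaps htIcc
    have hkey := key (γ t) hγV (deriv γ t) ht.2
    have hdf : deriv f t = φL (deriv γ t) := by
      have hnb : Icc a b ∈ 𝓝 t :=
        mem_of_superset (Ioo_mem_nhds htIoo.1 htIoo.2) Ioo_subset_Icc_self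
      have heq2 : f =ᶠ[𝓝 t] ⇑φL ∘ γ :=
        eventually_of_mem hnb fun s hs => (hEq hs).symm
      have hd : HasDerivAt (⇑φL ∘ γ) (φL (deriv γ t)) t :=
        φL.hasFDerivAt.comp_hasDerivAt t ht.1.hasDerivAt
      rw [heq2.deriv_eq, hd.deriv]
    rw [hdf]
    exact hkey
  have hγcont : ContinuousOn γ (Ioc a b) := hC₀.continuousOn.mono Ioc_subset_Icc_self
  have hdm : ∀ μ : Fin (n+1), Measurable fun t => deriv γ t μ := fun μ =>
    ((hcoord μ).measurable).comp (measurable_deriv γ)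
  have hGγ : ∀ μ ν, AEMeasurable (fun t => G μ ν (γ t)) (volume.restrict (Ioc a b)) := by
    intro μ ν
    have hcc : ContinuousOn (fun t => G μ ν (γ t)) (Ioc a b) :=
      (hg.2 μ ν).comp hγcont
        (fun t ht => (hmaps (Ioc_subset_Icc_self ht)).1.2.1)
    exact hcc.aemeasurable measurableSet_Ioc
  have hqm : AEMeasurable (fun t => g (γ t) (deriv γ t) (deriv γ t))
      (volume.restrict (Ioc a b)) := by
    have he : (fun t => g (γ t) (deriv γ t) (deriv γ t))
        = fun t => ∑ μ, ∑ ν, deriv γ t μ * deriv γ t ν * G μ ν (γ t) :=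
      funext fun t => bilin_expand n (g (γ t)) _ _
    rw [he]
    exact Finset.aemeasurable_fun_sum _ fun μ _ => Finset.aemeasurable_fun_sum _ fun ν _ =>
      (((hdm μ).aemeasurable.mul (hdm ν).aemeasurable).mul (hGγ μ ν))
  have hFm : AEStronglyMeasurable F (volume.restrict (Ioc a b)) := by
    have h1 : AEMeasurable (fun t => max 0 (-(g (γ t) (deriv γ t) (deriv γ t))))
        (volume.restrict (Ioc a b)) := aemeasurable_const.max hqm.neg
    exact (Real.continuous_sqrt.measurable.comp_aemeasurable h1).aestronglyMeasurable
  have hGint : Integrable (fun t => Kc * deriv f t) (volume.restrict (Ioc a b)) := by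
    refine Integrable.mono' (g := fun _ => Kc * ((‖φL‖₊ * C₀ : NNReal) : ℝ)) ?_ ?_ ?_
    · exact (integrableOn_const_iff).2 (Or.inr measure_Ioc_lt_top)
    · exact ((measurable_deriv f).const_mul Kc).aestronglyMeasurable
    · refine Eventually.of_forall fun t => ?_
      rw [Real.norm_eq_abs, abs_mul, abs_of_pos hKc]
      exact mul_le_mul_of_nonneg_left (hderivbd t) hKc.le
  have hFint : Integrable F (volume.restrict (Ioc a b)) := by
    refine Integrable.mono' hGint hFm ?_
    filter_upwards [haeF] with t ht
    rw [Real.norm_eq_abs, abs_of_nonneg (Real.sqrt_nonneg _)]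
    exact ht
  have hLg : Lg n g γ a b = ∫ t in Ioc a b, F t := by
    rw [show Lg n g γ a b = ∫ t in a..b, F t from rfl,
      intervalIntegral.integral_of_le hab]
  rw [hLg]
  have step1 : ∫ t in Ioc a b, F t ≤ ∫ t in Ioc a b, Kc * deriv f t :=
    integral_mono_ae hFint hGint haeF
  have step2 : ∫ t in Ioc a b, Kc * deriv f t = Kc * ∫ t in Ioc a b, deriv f t :=
    integral_const_mul Kc _
  have step3 : ∫ t in Ioc a b, deriv f t ≤ f b - f a := by
    rw [← intervalIntegral.integral_of_le hab]
    exact lipschitz_integral_deriv_le hfLip hab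
  have hfb : f b = φL (γ b) := (hEq ⟨hab, le_refl b⟩).symm
  have hfa : f a = φL (γ a) := (hEq ⟨le_refl a, hab⟩).symm
  have hγaV := hmaps (⟨le_refl a, hab⟩ : a ∈ Icc a b)
  have hγbV := hmaps (⟨hab, le_refl b⟩ : b ∈ Icc a b)
  have hdista : dist (γ a) p < r := Metric.mem_ball.1 hγaV.2
  have hdistb : dist (γ b) p < r := Metric.mem_ball.1 hγbV.2
  have h2r : ‖γ b - γ a‖ < 2 * r := by
    have htri := dist_triangle (γ b) p (γ a)
    have h1 : dist (γ b) (γ a) = ‖γ b - γ a‖ := dist_eq_norm _ _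
    have h2 : dist p (γ a) = dist (γ a) p := dist_comm _ _
    linarith
  have step4 : f b - f a ≤ ‖φL‖ * ‖γ b - γ a‖ := by
    rw [hfb, hfa, ← map_sub]
    calc φL (γ b - γ a) ≤ |φL (γ b - γ a)| := le_abs_self _
      _ = ‖φL (γ b - γ a)‖ := (Real.norm_eq_abs _).symm
      _ ≤ ‖φL‖ * ‖γ b - γ a‖ := φL.le_opNorm _
  have hφn : (0:ℝ) ≤ ‖φL‖ := norm_nonneg _
  calc ∫ t in Ioc a b, F t ≤ Kc * ∫ t in Ioc a b, deriv f t := by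
        rw [← step2]; exact step1
    _ ≤ Kc * (f b - f a) := mul_le_mul_of_nonneg_left step3 hKc.le
    _ ≤ Kc * (‖φL‖ * ‖γ b - γ a‖) := mul_le_mul_of_nonneg_left step4 hKc.le
    _ < ε := by
        have hnn : (0:ℝ) ≤ ‖γ b - γ a‖ := norm_nonneg _
        have h2rpos : (0:ℝ) < 2 * r := by linarith
        have hle : ‖φL‖ * ‖γ b - γ a‖ < (‖φL‖ + 1) * (2 * r) := by
          calc ‖φL‖ * ‖γ b - γ a‖ ≤ ‖φL‖ * (2 * r) :=
                mul_le_mul_of_nonneg_left h2r.le hφn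
            _ < (‖φL‖ + 1) * (2 * r) :=
                mul_lt_mul_of_pos_right (by linarith) h2rpos
        have h5 : Kc * (‖φL‖ * ‖γ b - γ a‖) < Kc * ((‖φL‖ + 1) * (2 * r)) :=
          mul_lt_mul_of_pos_left hle hKc
        have hD : (0:ℝ) < 2 * (Kc + 1) * (‖φL‖ + 1) :=
          mul_pos (mul_pos two_pos (by linarith)) (by linarith)
        have h6 : Kc * ((‖φL‖ + 1) * (2 * r)) < ε := by
          rw [hrdef]
          rw [show Kc * ((‖φL‖ + 1) * (2 * (ε / (2 * (Kc + 1) * (‖φL‖ + 1)))))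
              = (Kc * ((‖φL‖ + 1) * 2)) * ε / (2 * (Kc + 1) * (‖φL‖ + 1)) by ring]
          rw [div_lt_iff₀ hD]
          have hKlt : Kc * ((‖φL‖ + 1) * 2) < (Kc + 1) * ((‖φL‖ + 1) * 2) :=
            mul_lt_mul_of_pos_right (by linarith) (by linarith)
          have hmul := mul_lt_mul_of_pos_right hKlt hε
          have heq : (Kc + 1) * ((‖φL‖ + 1) * 2) * ε
              = ε * (2 * (Kc + 1) * (‖φL‖ + 1)) := by ring
          linarith
        linarith
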